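/- arXiv:2511.11497 — 3 statements merged into one kernel-verified Lean document; each statement's English description precedes it below -/
import Mathlib

section
/- (The two-filter formula.) For every 0 ≤ t ≤ T and every y ∈ E, the unnormalized smoothing marginal at time t, obtained by integrating U over all coordinates except the t-th (which is fixed to y), equals the product of the backward value function and the unnormalized filtering function: ∫_{E^{T}} U(x₀,…,x_{t−1}, y, x_{t+1},…,x_T) dμ^{⊗T}(x₀,…,x_{t−1},x_{t+1},…,x_T) = b_t(y) · π_t(y). -/
open MeasureTheory ENNReal
open scoped ENNReal BigOperators

/-!
Integrating out `x₀` replaces the initial density `u₀` by `y ↦ ∫ u₁(a, y) u₀(a) da = π₁(y)` and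
shifts the transitions by one step, while the filtering functions of the new model are `π (· + 1)`.
After `t` such steps the marginal at time `t` is `π_t(y)` times the integral of the transition
weights of a path starting at `y`, and peeling off that path's first step at a time unwinds the
backward recursion to `b_t(y)`.
-/

section

variable {E : Type*}

noncomputable def chainWeight (u : ℕ → E × E → ℝ≥0∞) {n : ℕ} (x : Fin (n + 1) → E) : ℝ≥0∞ :=
  ∏ i : Fin n, u (i + 1) (x i.castSucc, x i.succ)

theorem chainWeight_cons (u : ℕ → E × E → ℝ≥0∞) {n : ℕ} (a : E) (x : Fin (n + 1) → E) :
    chainWeight u (Fin.cons a x) = u 1 (a, x 0) * chainWeight (fun s => u (s + 1)) x := by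
  simp [chainWeight, Fin.prod_univ_succ]

theorem prod_Icc_eq_chainWeight (u : ℕ → E × E → ℝ≥0∞) {n : ℕ} (x : Fin (n + 1) → E) :
    ∏ s ∈ Finset.Icc 1 n, u s (x (Fin.ofNat (n + 1) (s - 1)), x (Fin.ofNat (n + 1) s)) =
      chainWeight u x := by
  rw [← Finset.Ico_add_one_right_eq_Icc, Finset.prod_Ico_eq_prod_range, chainWeight,
    ← Fin.prod_univ_eq_prod_range]
  refine Finset.prod_congr rfl fun i _ => ?_
  rw [add_comm 1]
  congr 3 <;> ext <;> simp [Nat.mod_eq_of_lt]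

noncomputable def pathDensity (u₀ : E → ℝ≥0∞) (u : ℕ → E × E → ℝ≥0∞) {n : ℕ}
    (x : Fin (n + 1) → E) : ℝ≥0∞ :=
  u₀ (x 0) * chainWeight u x

variable [MeasurableSpace E]

theorem measurable_chainWeight {u : ℕ → E × E → ℝ≥0∞} (hu : ∀ s, Measurable (u s)) (n : ℕ) :
    Measurable (chainWeight u (n := n)) :=
  Finset.measurable_prod _ fun _ _ =>
    (hu _).comp ((measurable_pi_apply _).prodMk (measurable_pi_apply _))

theorem measurable_fin_insertNth {n : ℕ} (i : Fin (n + 1)) (y : E) :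
    Measurable (Fin.insertNth (α := fun _ => E) i y) :=
  (MeasurableEquiv.piFinSuccAbove (fun _ => E) i).symm.measurable.comp
    (measurable_const.prodMk measurable_id)

theorem measurable_fin_cons {n : ℕ} (y : E) :
    Measurable (Fin.cons (α := fun _ => E) (n := n) y) := by
  refine measurable_pi_lambda _ fun j => ?_
  cases j using Fin.cases <;> simp [measurable_pi_apply]

theorem measurable_pathDensity {u₀ : E → ℝ≥0∞} (hu₀ : Measurable u₀) {u : ℕ → E × E → ℝ≥0∞}
    (hu : ∀ s, Measurable (u s)) (n : ℕ) : Measurable (pathDensity u₀ u (n := n)) :=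
  (hu₀.comp (measurable_pi_apply 0)).mul (measurable_chainWeight hu n)

theorem lintegral_pathDensity_cons (μ : Measure E) {u₀ : E → ℝ≥0∞} (hu₀ : Measurable u₀)
    {u : ℕ → E × E → ℝ≥0∞} (hu₁ : Measurable (u 1)) {n : ℕ} (x : Fin (n + 1) → E) :
    ∫⁻ a, pathDensity u₀ u (Fin.cons a x) ∂μ =
      pathDensity (fun y => ∫⁻ a, u 1 (a, y) * u₀ a ∂μ) (fun s => u (s + 1)) x := by
  simp only [pathDensity, chainWeight_cons, Fin.cons_zero]
  rw [← lintegral_mul_const]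
  · exact lintegral_congr fun a => by ring
  · exact (hu₁.comp (measurable_id.prodMk measurable_const)).mul hu₀

variable (μ : Measure E) [SigmaFinite μ]

theorem lintegral_pi_fin_succ {n : ℕ} {f : (Fin (n + 1) → E) → ℝ≥0∞} (hf : Measurable f) :
    ∫⁻ x, f x ∂Measure.pi (fun _ => μ) =
      ∫⁻ a, ∫⁻ x, f (Fin.cons a x) ∂Measure.pi (fun _ => μ) ∂μ := by
  have e := (measurePreserving_piFinSuccAbove (fun _ : Fin (n + 1) => μ) 0).symm
  rw [← e.lintegral_comp hf]
  refine (lintegral_prod (μ := μ) (ν := Measure.pi fun _ : Fin n => μ) _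
    (hf.comp e.measurable).aemeasurable).trans ?_
  simp [Fin.insertNthEquiv, Fin.insertNth_zero']

theorem lintegral_pi_fin_succ_symm {n : ℕ} {f : (Fin (n + 1) → E) → ℝ≥0∞} (hf : Measurable f) :
    ∫⁻ x, f x ∂Measure.pi (fun _ => μ) =
      ∫⁻ x, ∫⁻ a, f (Fin.cons a x) ∂μ ∂Measure.pi (fun _ => μ) := by
  have e := (measurePreserving_piFinSuccAbove (fun _ : Fin (n + 1) => μ) 0).symm
  rw [← e.lintegral_comp hf]
  refine (lintegral_prod_symm (μ := μ) (ν := Measure.pi fun _ : Fin n => μ) _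
    (hf.comp e.measurable).aemeasurable).trans ?_
  simp [Fin.insertNthEquiv, Fin.insertNth_zero']

theorem lintegral_pathDensity_insertNth (k : ℕ) {t : ℕ} {u₀ : E → ℝ≥0∞} (hu₀ : Measurable u₀)
    {u : ℕ → E × E → ℝ≥0∞} (hu : ∀ s, Measurable (u s)) {π : ℕ → E → ℝ≥0∞}
    (hπ0 : ∀ x, π 0 x = u₀ x)
    (hπrec : ∀ s, 1 ≤ s → s ≤ t → ∀ y, π s y = ∫⁻ x, u s (x, y) * π (s - 1) x ∂μ) (y : E) :
    ∫⁻ z : Fin (k + t) → E, pathDensity u₀ u (Fin.insertNth ⟨t, by omega⟩ y z)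
        ∂Measure.pi (fun _ => μ) =
      (∫⁻ w : Fin k → E, chainWeight (fun s => u (t + s)) (Fin.cons y w) ∂Measure.pi (fun _ => μ))
        * π t y := by
  induction t generalizing u₀ u π with
  | zero =>
    simp only [Fin.mk_zero, Fin.insertNth_zero', pathDensity, Fin.cons_zero, zero_add, hπ0]
    rw [lintegral_const_mul, mul_comm]
    · rfl
    · exact (measurable_chainWeight hu _).comp (measurable_fin_cons y)
  | succ t ih =>
    set u₀' : E → ℝ≥0∞ := fun y => ∫⁻ a, u 1 (a, y) * u₀ a ∂μ
    have hu₀' : Measurable u₀' := Measurable.lintegral_prod_left'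
      ((hu 1).mul (hu₀.comp measurable_fst))
    have hπ1 : ∀ x, π (0 + 1) x = u₀' x := fun x => by
      simp only [hπrec 1 le_rfl (by omega), Nat.sub_self, hπ0, u₀']
    have hπrec' : ∀ s, 1 ≤ s → s ≤ t → ∀ y,
        π (s + 1) y = ∫⁻ x, u (s + 1) (x, y) * π (s - 1 + 1) x ∂μ := fun s h1 h2 y => by
      rw [hπrec (s + 1) (by omega) (by omega), Nat.sub_add_cancel h1, Nat.add_sub_cancel]
    have hshift : (fun s => u (t + s + 1)) = fun s => u (t + 1 + s) :=
      funext fun s => by rw [add_right_comm]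
    have hi : (⟨t + 1, by omega⟩ : Fin (k + t + 2)) = Fin.succ ⟨t, by omega⟩ := rfl
    calc ∫⁻ z : Fin (k + t + 1) → E, pathDensity u₀ u (Fin.insertNth ⟨t + 1, by omega⟩ y z)
          ∂Measure.pi (fun _ => μ)
        = ∫⁻ w, ∫⁻ a, pathDensity u₀ u (Fin.insertNth ⟨t + 1, by omega⟩ y (Fin.cons a w)) ∂μ
            ∂Measure.pi (fun _ => μ) :=
          lintegral_pi_fin_succ_symm μ
            ((measurable_pathDensity hu₀ hu _).comp (measurable_fin_insertNth _ y))
      _ = ∫⁻ w : Fin (k + t) → E,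
            pathDensity u₀' (fun s => u (s + 1)) (Fin.insertNth ⟨t, by omega⟩ y w)
            ∂Measure.pi (fun _ => μ) := by
          simp only [hi, Fin.insertNth_succ_cons, lintegral_pathDensity_cons μ hu₀ (hu 1)]
          rfl
      _ = _ := by
          rw [ih hu₀' (fun s => hu _) hπ1 hπrec', hshift]

theorem lintegral_chainWeight_cons_eq_backward {T : ℕ} {u : ℕ → E × E → ℝ≥0∞}
    (hu : ∀ s, Measurable (u s)) {b : ℕ → E → ℝ≥0∞} (hbT : ∀ x, b T x = 1)
    (hbrec : ∀ t, 1 ≤ t → t ≤ T → ∀ x, b (t - 1) x = ∫⁻ y, b t y * u t (x, y) ∂μ)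
    (k t : ℕ) (hkt : t + k = T) (y : E) :
    ∫⁻ w : Fin k → E, chainWeight (fun s => u (t + s)) (Fin.cons y w) ∂Measure.pi (fun _ => μ) =
      b t y := by
  induction k generalizing t y with
  | zero =>
    obtain rfl : t = T := hkt
    simp [chainWeight, hbT]
  | succ k ih =>
    have hb := hbrec (t + 1) (by omega) (by omega) y
    rw [Nat.add_sub_cancel] at hb
    have hshift : (fun s => u (t + (s + 1))) = fun s => u (t + 1 + s) :=
      funext fun s => by rw [add_comm s, ← add_assoc]
    rw [lintegral_pi_fin_succ μ, hb]
    · refine lintegral_congr fun a => ?_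
      simp only [chainWeight_cons, Fin.cons_zero, hshift]
      rw [lintegral_const_mul, ih (t + 1) (by omega) a, mul_comm]
      exact (measurable_chainWeight (fun s => hu _) _).comp (measurable_fin_cons a)
    · exact (measurable_chainWeight (fun s => hu _) _).comp (measurable_fin_cons y)

end

/-- **The two-filter formula.**
With `U x = u₀ (x 0) * ∏_{t=1}^T u t (x (t-1), x t)` the unnormalized posterior,
`b` the backward value functions (`b T ≡ 1`, `b (t-1) x = ∫ b t y * u t (x,y) μ(dy)`) and
`π` the unnormalized filtering functions (`π 0 = u₀`, `π t y = ∫ u t (x,y) * π (t-1) x μ(dx)`),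
for every `0 ≤ t ≤ T` and `y ∈ E`, integrating `U` over all coordinates except the `t`-th
(fixed to `y`) yields `b t y * π t y`. -/
theorem two_filter_formula
    {E : Type*} [MeasurableSpace E] (μ : Measure E) [SigmaFinite μ] (T : ℕ)
    (u₀ : E → ℝ≥0∞) (hu₀ : Measurable u₀)
    (u : ℕ → E × E → ℝ≥0∞) (hu : ∀ t, Measurable (u t))
    (b : ℕ → E → ℝ≥0∞)
    (hbT : ∀ x, b T x = 1)
    (hbrec : ∀ t, 1 ≤ t → t ≤ T → ∀ x, b (t - 1) x = ∫⁻ y, b t y * u t (x, y) ∂μ)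
    (π : ℕ → E → ℝ≥0∞)
    (hπ0 : ∀ x, π 0 x = u₀ x)
    (hπrec : ∀ t, 1 ≤ t → t ≤ T → ∀ y, π t y = ∫⁻ x, u t (x, y) * π (t - 1) x ∂μ) :
    ∀ t : ℕ, ∀ ht : t ≤ T, ∀ y : E,
      (∫⁻ z : Fin T → E,
          (let x : Fin (T + 1) → E := Fin.insertNth ⟨t, Nat.lt_succ_of_le ht⟩ y z
           u₀ (x 0) * ∏ s ∈ Finset.Icc 1 T, u s (x (Fin.ofNat (T + 1) (s - 1)), x (Fin.ofNat (T + 1) s)))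
          ∂(Measure.pi fun _ : Fin T => μ))
        = b t y * π t y := by
  intro t ht y
  obtain ⟨k, rfl⟩ : ∃ k, T = k + t := ⟨T - t, by omega⟩
  simp only [prod_Icc_eq_chainWeight]
  refine (lintegral_pathDensity_insertNth μ k hu₀ hu hπ0
    (fun s h₁ h₂ => hπrec s h₁ (by omega)) y).trans ?_
  rw [lintegral_chainWeight_cons_eq_backward μ hu hbT hbrec k t (add_comm t k)]
end

section
/- (The forward representer lower-bounds the unnormalized filtering density.) Suppose: (a) α₀ = u₀ = π₀ pointwise; (b) for each 1 ≤ t ≤ T and every y, ∫ q_t(y,x) μ(dx) = 1; (c) for each 1 ≤ t ≤ T and every y: u_t(x,y) > 0 for μ-almost every x in {x : q_t(y,x) > 0}, the function x ↦ q_t(y,x)·log(u_t(x,y)·α_{t−1}(x)/q_t(y,x)) (set to 0 where q_t(y,x) = 0) is μ-integrable, and log α_t(y) = ∫ q_t(y,x)·log(u_t(x,y)·α_{t−1}(x)/q_t(y,x)) μ(dx); (d) for each 1 ≤ t ≤ T and every y, the function x ↦ u_t(x,y)·π_{t−1}(x) is μ-integrable, so that the Bayesian forward recursion π_t(y) = ∫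 u_t(x,y)·π_{t−1}(x) μ(dx) is well defined with real values. Then for every 0 ≤ t ≤ T and every y ∈ E, α_t(y) ≤ π_t(y). -/
/-!
By induction on `t`. The step is Gibbs' inequality: for a probability density `q` and
`f ≥ 0`, `∫ q log (f / q) ≤ log ∫ f`. Applied with `q = q_t(y, ·)` and
`f = u_t(·, y) α_{t-1}`, the variational recursion gives
`log α_t(y) ≤ log ∫ u_t(x, y) α_{t-1}(x) dx`, and the induction hypothesis
`α_{t-1} ≤ π_{t-1}` bounds that integral by `π_t(y)`.
-/

open MeasureTheory

section Gibbs

open Real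

lemma mul_log_div_le_div_sub_add_mul_log {q f c : ℝ} (hq : 0 < q) (hf : 0 < f) (hc : 0 < c) :
    q * log (f / q) ≤ f / c - q + q * log c := by
  have hsplit : log (f / q) = log (f / (c * q)) + log c := by
    rw [← log_mul (by positivity) hc.ne']
    congr 1
    field_simp
  calc q * log (f / q) = q * log (f / (c * q)) + q * log c := by rw [hsplit, mul_add]
    _ ≤ q * (f / (c * q) - 1) + q * log c := by
      gcongr
      exact log_le_sub_one_of_pos (by positivity)
    _ = f / c - q + q * log c := by field_simp

lemma ite_mul_log_div_le_div_sub_add_mul_log {q f c : ℝ} (hq : 0 ≤ q) (hf : 0 ≤ f)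
    (hfq : 0 < q → 0 < f) (hc : 0 < c) :
    (if q = 0 then 0 else q * log (f / q)) ≤ f / c - q + q * log c := by
  split_ifs with h
  · simp only [h, sub_zero, zero_mul, add_zero]
    positivity
  · have hq' : 0 < q := hq.lt_of_ne' h
    exact mul_log_div_le_div_sub_add_mul_log hq' (hfq hq') hc

variable {X : Type*} [MeasurableSpace X] {μ : Measure X} {q f : X → ℝ}

lemma integral_pos_of_ae_pos_of_density_pos (hq : ∀ x, 0 ≤ q x) (hq1 : ∫ x, q x ∂μ = 1)
    (hf : ∀ x, 0 ≤ f x) (hfi : Integrable f μ) (hfq : ∀ᵐ x ∂μ, 0 < q x → 0 < f x) :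
    0 < ∫ x, f x ∂μ := by
  refine (integral_nonneg hf).lt_of_ne' fun hf0 => ?_
  have hf_ae : f =ᵐ[μ] 0 := (integral_eq_zero_iff_of_nonneg hf hfi).mp hf0
  have hq_ae : q =ᵐ[μ] 0 := by
    filter_upwards [hf_ae, hfq] with x hfx hfqx
    by_contra hqx
    exact (hfqx ((hq x).lt_of_ne' hqx)).ne' hfx
  simp [integral_congr_ae hq_ae] at hq1

theorem integral_ite_mul_log_div_le_log_integral (hq : ∀ x, 0 ≤ q x) (hq1 : ∫ x, q x ∂μ = 1)
    (hf : ∀ x, 0 ≤ f x) (hfi : Integrable f μ) (hfq : ∀ᵐ x ∂μ, 0 < q x → 0 < f x)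
    (hi : Integrable (fun x => if q x = 0 then 0 else q x * log (f x / q x)) μ) :
    ∫ x, (if q x = 0 then 0 else q x * log (f x / q x)) ∂μ ≤ log (∫ x, f x ∂μ) := by
  set c := ∫ x, f x ∂μ
  have hc : 0 < c := integral_pos_of_ae_pos_of_density_pos hq hq1 hf hfi hfq
  have hqi : Integrable q μ := Integrable.of_integral_ne_zero (by simp [hq1])
  calc ∫ x, (if q x = 0 then 0 else q x * log (f x / q x)) ∂μ
      ≤ ∫ x, (f x / c - q x + q x * log c) ∂μ := by
        refine integral_mono_ae hi (((hfi.div_const c).sub hqi).add (hqi.mul_const _)) ?_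
        filter_upwards [hfq] with x hfqx
        exact ite_mul_log_div_le_div_sub_add_mul_log (hq x) (hf x) hfqx hc
    _ = log c := by
      rw [integral_add (f := fun x => f x / c - q x) ((hfi.div_const c).sub hqi) (hqi.mul_const _),
        integral_sub (hfi.div_const c) hqi, integral_div, integral_mul_const, hq1,
        div_self hc.ne']
      ring

end Gibbs

theorem forward_representer_le_filtering_density_general
    {E : Type*} [MeasurableSpace E] (μ : Measure E) (T : ℕ)
    (u₀ : E → ℝ)
    (u : ℕ → E × E → ℝ) (hum : ∀ t, Measurable (u t)) (hu0 : ∀ t p, 0 ≤ u t p)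
    (q : ℕ → E × E → ℝ) (hq0 : ∀ t p, 0 ≤ q t p)
    (α : ℕ → E → ℝ) (hαm : ∀ t, Measurable (α t)) (hαpos : ∀ t y, 0 < α t y)
    (π : ℕ → E → ℝ)
    -- (a): α₀ = u₀ = π₀
    (hα0 : ∀ x, α 0 x = u₀ x) (hπ0 : ∀ x, π 0 x = u₀ x)
    -- (b): each `q t (y, ·)` is a probability density
    (hb : ∀ t, 1 ≤ t → t ≤ T → ∀ y, (∫ x, q t (y, x) ∂μ) = 1)
    -- (c): positivity, integrability, and the variational forward value recursion
    (hc₁ : ∀ t, 1 ≤ t → t ≤ T → ∀ y,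
      ∀ᵐ x ∂μ, 0 < q t (y, x) → 0 < u t (x, y))
    (hc₂ : ∀ t, 1 ≤ t → t ≤ T → ∀ y,
      Integrable (fun x => if q t (y, x) = 0 then 0
        else q t (y, x) * Real.log (u t (x, y) * α (t - 1) x / q t (y, x))) μ)
    (hc₃ : ∀ t, 1 ≤ t → t ≤ T → ∀ y,
      Real.log (α t y) = ∫ x,
        (if q t (y, x) = 0 then 0
         else q t (y, x) * Real.log (u t (x, y) * α (t - 1) x / q t (y, x))) ∂μ)
    -- (d): the Bayesian forward recursion is well defined with real values
    (hd₁ : ∀ t, 1 ≤ t → t ≤ T → ∀ y,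
      Integrable (fun x => u t (x, y) * π (t - 1) x) μ)
    (hd₂ : ∀ t, 1 ≤ t → t ≤ T → ∀ y,
      π t y = ∫ x, u t (x, y) * π (t - 1) x ∂μ) :
    ∀ t, t ≤ T → ∀ y : E, α t y ≤ π t y := by
  intro t
  induction t with
  | zero => intro _ y; rw [hα0, hπ0]
  | succ n ih =>
    intro hT y
    have h1 : 1 ≤ n + 1 := Nat.le_add_left 1 n
    have hle : ∀ x, u (n + 1) (x, y) * α n x ≤ u (n + 1) (x, y) * π n x := fun x =>
      mul_le_mul_of_nonneg_left (ih (Nat.le_of_succ_le hT) x) (hu0 _ _)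
    have hf0 : ∀ x, 0 ≤ u (n + 1) (x, y) * α n x := fun x => mul_nonneg (hu0 _ _) (hαpos n x).le
    have hαi : Integrable (fun x => u (n + 1) (x, y) * α n x) μ :=
      (hd₁ _ h1 hT y).mono'
        (((hum _).comp (measurable_id.prodMk measurable_const)).mul (hαm n)).aestronglyMeasurable
        (ae_of_all _ fun x => (Real.norm_of_nonneg (hf0 x)).trans_le (hle x))
    have hfq : ∀ᵐ x ∂μ, 0 < q (n + 1) (y, x) → 0 < u (n + 1) (x, y) * α n x := by
      filter_upwards [hc₁ _ h1 hT y] with x hx hqx using mul_pos (hx hqx) (hαpos n x)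
    have hgibbs : Real.log (α (n + 1) y) ≤ Real.log (∫ x, u (n + 1) (x, y) * α n x ∂μ) :=
      hc₃ _ h1 hT y ▸ integral_ite_mul_log_div_le_log_integral (fun x => hq0 _ _) (hb _ h1 hT y)
        hf0 hαi hfq (hc₂ _ h1 hT y)
    have hpos : 0 < ∫ x, u (n + 1) (x, y) * α n x ∂μ :=
      integral_pos_of_ae_pos_of_density_pos (fun x => hq0 _ _) (hb _ h1 hT y) hf0 hαi hfq
    calc α (n + 1) y ≤ ∫ x, u (n + 1) (x, y) * α n x ∂μ :=
          (Real.log_le_log_iff (hαpos _ y) hpos).mp hgibbs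
      _ ≤ π (n + 1) y := hd₂ _ h1 hT y ▸ integral_mono hαi (hd₁ _ h1 hT y) hle

/-- **The forward representer lower-bounds the unnormalized filtering density.**
Let `u₀` be the positive unnormalized initial density, `u t` the one-step unnormalized
transition densities, `q t` variational reverse-time transition kernel densities, `α t`
the positive forward value representers and `π t` the unnormalized Bayesian filtering
densities (`π 0 = u₀`, `π t y = ∫ u t (x,y) * π (t-1) x μ(dx)`).  Under the variational
forward value recursion for `α`, one has `α t y ≤ π t y` for all `0 ≤ t ≤ T` and all `y`. -/
theorem forward_representer_le_filtering_density
    {E : Type*} [MeasurableSpace E] (μ : Measure E) [SigmaFinite μ] (T : ℕ)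
    (u₀ : E → ℝ) (hu₀m : Measurable u₀) (hu₀pos : ∀ x, 0 < u₀ x)
    (u : ℕ → E × E → ℝ) (hum : ∀ t, Measurable (u t)) (hu0 : ∀ t p, 0 ≤ u t p)
    (q : ℕ → E × E → ℝ) (hqm : ∀ t, Measurable (q t)) (hq0 : ∀ t p, 0 ≤ q t p)
    (α : ℕ → E → ℝ) (hαm : ∀ t, Measurable (α t)) (hαpos : ∀ t y, 0 < α t y)
    (π : ℕ → E → ℝ)
    -- (a): α₀ = u₀ = π₀
    (hα0 : ∀ x, α 0 x = u₀ x) (hπ0 : ∀ x, π 0 x = u₀ x)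
    -- (b): each `q t (y, ·)` is a probability density
    (hb : ∀ t, 1 ≤ t → t ≤ T → ∀ y, (∫ x, q t (y, x) ∂μ) = 1)
    -- (c): positivity, integrability, and the variational forward value recursion
    (hc₁ : ∀ t, 1 ≤ t → t ≤ T → ∀ y,
      ∀ᵐ x ∂μ, 0 < q t (y, x) → 0 < u t (x, y))
    (hc₂ : ∀ t, 1 ≤ t → t ≤ T → ∀ y,
      Integrable (fun x => if q t (y, x) = 0 then 0
        else q t (y, x) * Real.log (u t (x, y) * α (t - 1) x / q t (y, x))) μ)
    (hc₃ : ∀ t, 1 ≤ t → t ≤ T → ∀ y,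
      Real.log (α t y) = ∫ x,
        (if q t (y, x) = 0 then 0
         else q t (y, x) * Real.log (u t (x, y) * α (t - 1) x / q t (y, x))) ∂μ)
    -- (d): the Bayesian forward recursion is well defined with real values
    (hd₁ : ∀ t, 1 ≤ t → t ≤ T → ∀ y,
      Integrable (fun x => u t (x, y) * π (t - 1) x) μ)
    (hd₂ : ∀ t, 1 ≤ t → t ≤ T → ∀ y,
      π t y = ∫ x, u t (x, y) * π (t - 1) x ∂μ) :
    ∀ t, t ≤ T → ∀ y : E, α t y ≤ π t y :=
  forward_representer_le_filtering_density_general μ T u₀ u hum hu0 q hq0 α hαm hαpos π hα0 hπ0 hb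
    hc₁ hc₂ hc₃ hd₁ hd₂
end

section
/- (Gaussian component of the variational filtering update.) Let P := ∑_{z} f(z)·Σ(z)⁻¹ (which is positive definite), Σ̄ := P⁻¹, m̄ := Σ̄·( ∑_{z} f(z)·Σ(z)⁻¹·m(z) ), log ζ := ∑_{z} f(z)·log g(m̄ | z) + (1/2)·log det(2π·Σ̄), and let ḡ be the Gaussian density with mean m̄ and covariance Σ̄. Then for every measurable probability density q : ℝ^d → ℝ with respect to Lebesgue measure (q ≥ 0, ∫ q = 1) such that the function x ↦ q(x)·( ∑_z f(z)·log g(x | z) − log q(x) ) (set to 0 where q(x) = 0) is Lebesgue-integrable, one has ∑_{z} f(z)·∫_{ℝ^d} log( g(x | z)/q(x) )·q(x) dx ≤ log ζ, with equality if and only if q = ḡ Lebesgue-almost everywhere. In particular the Gaussian ḡ is the relative-entropy-optimal mean-field update for the continuous state component, and the attained maximal value is log ζ. -/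
open MeasureTheory Matrix
open scoped BigOperators

/-- The Gaussian density on `ℝ^d` with mean `m` and (positive definite) covariance `S`:
`g(x) = det(2π·S)^{-1/2} · exp(−(1/2)·(x−m)ᵀ S⁻¹ (x−m))`. -/
noncomputable def gaussianDensity {d : ℕ} (m : Fin d → ℝ)
    (S : Matrix (Fin d) (Fin d) ℝ) (x : Fin d → ℝ) : ℝ :=
  ((2 * Real.pi) • S).det ^ (-(1 : ℝ) / 2) *
    Real.exp (-(1 / 2) * ((x - m) ⬝ᵥ S⁻¹.mulVec (x - m)))

/-!
Completing the square in `∑ z, f z * (x - m z)ᵀ Σ(z)⁻¹ (x - m z)` shows that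
`∑ z, f z * log g(x | z) = log ḡ(x) + log ζ` for every `x`. As `∑ z, f z = 1`, the objective is then
`log ζ - KL(q ‖ ḡ)`, and Gibbs' inequality `log (a / b) * b ≤ a - b` gives `KL(q ‖ ḡ) ≥ 0`, with
equality iff `q = ḡ` almost everywhere. To split the objective into its components, note that
each of them is bounded above by the integrable `f z * (g(· | z) - q)` (Gibbs again), while their
sum is integrable by hypothesis; hence each one is integrable.
-/

section QuadraticForm

variable {ι κ R : Type*} [Fintype ι] [Fintype κ]

theorem Matrix.IsSymm.dotProduct_mulVec_comm [CommSemiring R] {A : Matrix ι ι R} (hA : A.IsSymm)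
    (u v : ι → R) : u ⬝ᵥ A *ᵥ v = v ⬝ᵥ A *ᵥ u := by
  rw [dotProduct_mulVec, ← mulVec_transpose, hA.eq, dotProduct_comm]

theorem dotProduct_sum_smul_mulVec [CommSemiring R] (c : κ → R) (A : κ → Matrix ι ι R)
    (u v : ι → R) : u ⬝ᵥ (∑ z, c z • A z) *ᵥ v = ∑ z, c z * (u ⬝ᵥ A z *ᵥ v) := by
  simp_rw [Matrix.sum_mulVec, dotProduct_sum, smul_mulVec, dotProduct_smul, smul_eq_mul]

theorem sum_mul_dotProduct_mulVec_sub_eq_add [CommRing R] (c : κ → R) {A : κ → Matrix ι ι R}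
    (hA : ∀ z, (A z).IsSymm) (m : κ → ι → R) {mbar : ι → R}
    (hmean : (∑ z, c z • A z) *ᵥ mbar = ∑ z, c z • A z *ᵥ m z) (x : ι → R) :
    ∑ z, c z * ((x - m z) ⬝ᵥ A z *ᵥ (x - m z)) =
      (x - mbar) ⬝ᵥ (∑ z, c z • A z) *ᵥ (x - mbar) +
        ∑ z, c z * ((mbar - m z) ⬝ᵥ A z *ᵥ (mbar - m z)) := by
  have hcross : ∑ z, c z * ((x - mbar) ⬝ᵥ A z *ᵥ (mbar - m z)) = 0 := by
    simp_rw [mulVec_sub, dotProduct_sub, mul_sub, Finset.sum_sub_distrib,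
      ← dotProduct_sum_smul_mulVec, hmean, dotProduct_sum, dotProduct_smul, smul_eq_mul, sub_self]
  have hsplit : ∀ z, (x - m z) ⬝ᵥ A z *ᵥ (x - m z) = (x - mbar) ⬝ᵥ A z *ᵥ (x - mbar) +
      2 * ((x - mbar) ⬝ᵥ A z *ᵥ (mbar - m z)) + (mbar - m z) ⬝ᵥ A z *ᵥ (mbar - m z) := by
    intro z
    rw [← sub_add_sub_cancel x mbar (m z), mulVec_add, dotProduct_add, add_dotProduct,
      add_dotProduct, (hA z).dotProduct_mulVec_comm (mbar - m z)]
    ring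
  simp_rw [hsplit, mul_add, Finset.sum_add_distrib, mul_left_comm _ (2 : R), ← Finset.mul_sum,
    hcross, ← dotProduct_sum_smul_mulVec]
  ring

end QuadraticForm

theorem Matrix.posDef_sum_smul {ι κ : Type*} [Fintype κ] {c : κ → ℝ} (hc : ∀ z, 0 ≤ c z)
    {z₀ : κ} (hz₀ : 0 < c z₀) {A : κ → Matrix ι ι ℝ} (hA : ∀ z, (A z).PosDef) :
    (∑ z, c z • A z).PosDef := by
  classical
  rw [← Finset.add_sum_erase _ _ (Finset.mem_univ z₀)]
  exact ((hA z₀).smul hz₀).add_posSemidef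
    (posSemidef_sum _ fun z _ => (hA z).posSemidef.smul (hc z))

open scoped MatrixOrder in
theorem Matrix.PosDef.exists_isSymm_mul_self_eq {ι : Type*} [Fintype ι] [DecidableEq ι]
    {A : Matrix ι ι ℝ} (hA : A.PosDef) :
    ∃ C : Matrix ι ι ℝ, C.IsSymm ∧ C * C = A ∧ C.det = Real.sqrt A.det := by
  refine ⟨CFC.sqrt A, ?_, CFC.sqrt_mul_sqrt_self A hA.posSemidef.nonneg, ?_⟩
  · simpa using (CFC.sqrt_nonneg A).posSemidef.isHermitian
  · rw [hA.posSemidef.det_sqrt, RCLike.sqrt_real]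

section StandardGaussian

variable {ι : Type*} [Fintype ι]

theorem exp_neg_half_dotProduct_self (w : ι → ℝ) :
    Real.exp (-(1 / 2) * (w ⬝ᵥ w)) = ∏ i, Real.exp (-(1 / 2) * w i ^ 2) := by
  simp_rw [← Real.exp_sum, dotProduct, Finset.mul_sum, sq]

theorem integrable_exp_neg_half_dotProduct_self :
    Integrable fun w : ι → ℝ => Real.exp (-(1 / 2) * (w ⬝ᵥ w)) := by
  simp_rw [exp_neg_half_dotProduct_self]
  exact Integrable.fintype_prod (f := fun _ t => Real.exp (-(1 / 2) * t ^ 2))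
    fun _ => integrable_exp_neg_mul_sq (by norm_num)

theorem integral_exp_neg_half_dotProduct_self :
    ∫ w : ι → ℝ, Real.exp (-(1 / 2) * (w ⬝ᵥ w)) = Real.sqrt (2 * Real.pi) ^ Fintype.card ι := by
  simp_rw [exp_neg_half_dotProduct_self]
  rw [volume_pi, integral_fintype_prod_eq_pow (fun t : ℝ => Real.exp (-(1 / 2) * t ^ 2)),
    integral_gaussian]
  congr 2
  ring

end StandardGaussian

section LinearChangeOfVariables

variable {ι : Type*} [Fintype ι] [DecidableEq ι] {C : Matrix ι ι ℝ} (hC : C.det ≠ 0)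
  {φ : (ι → ℝ) → ℝ}
include hC

theorem map_mulVec_volume : Measure.map (C *ᵥ ·) volume = ENNReal.ofReal |C.det⁻¹| • volume :=
  Real.map_matrix_volume_pi_eq_smul_volume_pi hC

theorem integrable_comp_mulVec (hφ : Integrable φ) : Integrable fun x => φ (C *ᵥ x) := by
  have hmeas : Measurable (C *ᵥ ·) := by fun_prop
  have : Integrable φ (Measure.map (C *ᵥ ·) volume) := by
    rw [map_mulVec_volume hC]
    exact hφ.smul_measure ENNReal.ofReal_ne_top
  exact (integrable_map_measure this.aestronglyMeasurable hmeas.aemeasurable).1 this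

theorem integral_comp_mulVec (hφ : AEStronglyMeasurable φ) :
    ∫ x, φ (C *ᵥ x) = |C.det|⁻¹ * ∫ x, φ x := by
  have hmeas : Measurable (C *ᵥ ·) := by fun_prop
  rw [← integral_map hmeas.aemeasurable (by rw [map_mulVec_volume hC]; exact hφ.smul_measure _),
    map_mulVec_volume hC, integral_smul_measure, ENNReal.toReal_ofReal (abs_nonneg _), abs_inv,
    smul_eq_mul]

end LinearChangeOfVariables

section GaussianDensity

variable {d : ℕ} {A : Matrix (Fin d) (Fin d) ℝ}

theorem det_two_pi_smul_pos (hA : A.PosDef) : 0 < ((2 * Real.pi) • A).det :=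
  (hA.smul (by positivity)).det_pos

theorem gaussianDensity_pos (hA : A.PosDef) (m x : Fin d → ℝ) : 0 < gaussianDensity m A x :=
  mul_pos (Real.rpow_pos_of_pos (det_two_pi_smul_pos hA) _) (Real.exp_pos _)

theorem log_gaussianDensity (hA : A.PosDef) (m x : Fin d → ℝ) :
    Real.log (gaussianDensity m A x) =
      -(1 / 2) * Real.log ((2 * Real.pi) • A).det - 1 / 2 * ((x - m) ⬝ᵥ A⁻¹ *ᵥ (x - m)) := by
  rw [gaussianDensity, Real.log_mul (Real.rpow_pos_of_pos (det_two_pi_smul_pos hA) _).ne'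
    (Real.exp_ne_zero _), Real.log_rpow (det_two_pi_smul_pos hA), Real.log_exp]
  ring

theorem continuous_gaussianDensity (m : Fin d → ℝ) (A : Matrix (Fin d) (Fin d) ℝ) :
    Continuous (gaussianDensity m A) := by
  unfold gaussianDensity
  fun_prop

theorem gaussianDensity_eq_mul_exp {C : Matrix (Fin d) (Fin d) ℝ} (hC : C.IsSymm)
    (hCA : C * C = A⁻¹) (m x : Fin d → ℝ) :
    gaussianDensity m A x = ((2 * Real.pi) • A).det ^ (-(1 : ℝ) / 2) *
      Real.exp (-(1 / 2) * (C *ᵥ (x - m) ⬝ᵥ C *ᵥ (x - m))) := by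
  rw [gaussianDensity, ← hCA, ← mulVec_mulVec, hC.dotProduct_mulVec_comm]

theorem sum_mul_log_gaussianDensity_sub_log_eq {κ : Type*} [Fintype κ] (f : κ → ℝ)
    {m : κ → Fin d → ℝ} {S : κ → Matrix (Fin d) (Fin d) ℝ} (hS : ∀ z, (S z).PosDef)
    {Sbar : Matrix (Fin d) (Fin d) ℝ} (hSbar : Sbar.PosDef) {mbar : Fin d → ℝ}
    (hprec : Sbar⁻¹ = ∑ z, f z • (S z)⁻¹) (hmean : Sbar⁻¹ *ᵥ mbar = ∑ z, f z • (S z)⁻¹ *ᵥ m z)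
    (x y : Fin d → ℝ) :
    ∑ z, f z * Real.log (gaussianDensity (m z) (S z) x) - Real.log (gaussianDensity mbar Sbar x) =
      ∑ z, f z * Real.log (gaussianDensity (m z) (S z) y) -
        Real.log (gaussianDensity mbar Sbar y) := by
  have hsquare := sum_mul_dotProduct_mulVec_sub_eq_add f
    (fun z => isHermitian_iff_isSymm.1 (hS z).inv.isHermitian) m (hprec ▸ hmean)
  have hsplit : ∀ x, ∑ z, f z * Real.log (gaussianDensity (m z) (S z) x) -
      Real.log (gaussianDensity mbar Sbar x) =
        ∑ z, f z * (-(1 / 2) * Real.log ((2 * Real.pi) • S z).det) +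
          1 / 2 * Real.log ((2 * Real.pi) • Sbar).det -
          1 / 2 * (∑ z, f z * ((x - m z) ⬝ᵥ (S z)⁻¹ *ᵥ (x - m z)) -
            (x - mbar) ⬝ᵥ Sbar⁻¹ *ᵥ (x - mbar)) := by
    intro x
    simp only [log_gaussianDensity (hS _), log_gaussianDensity hSbar, mul_sub,
      Finset.sum_sub_distrib, Finset.mul_sum]
    ring_nf
  rw [hsplit, hsplit, hsquare x, hsquare y, hprec]
  ring

theorem integrable_gaussianDensity (hA : A.PosDef) (m : Fin d → ℝ) :
    Integrable (gaussianDensity m A) := by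
  obtain ⟨C, hC, hCA, hdet⟩ := hA.inv.exists_isSymm_mul_self_eq
  have hCdet : C.det ≠ 0 := hdet ▸ (Real.sqrt_pos.2 hA.inv.det_pos).ne'
  rw [funext (gaussianDensity_eq_mul_exp hC hCA m)]
  exact ((integrable_comp_mulVec hCdet integrable_exp_neg_half_dotProduct_self).const_mul _
    ).comp_sub_right m

theorem det_two_pi_smul_rpow_mul_sqrt_det (hA : A.PosDef) :
    ((2 * Real.pi) • A).det ^ (-(1 : ℝ) / 2) * (√A.det * √(2 * Real.pi) ^ d) = 1 := by
  have ht : 0 < √A.det * √(2 * Real.pi) ^ d := by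
    have := hA.det_pos
    positivity
  have hsq : ((2 * Real.pi) • A).det = (√A.det * √(2 * Real.pi) ^ d) ^ (2 : ℝ) := by
    rw [det_smul, Fintype.card_fin, Real.rpow_two, mul_pow (√A.det), Real.sq_sqrt hA.det_pos.le,
      ← pow_mul, mul_comm d, pow_mul, Real.sq_sqrt (by positivity), mul_comm]
  rw [hsq, ← Real.rpow_mul ht.le, show (2 : ℝ) * (-1 / 2) = -1 by norm_num, Real.rpow_neg_one,
    inv_mul_cancel₀ ht.ne']

theorem integral_gaussianDensity (hA : A.PosDef) (m : Fin d → ℝ) :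
    ∫ x, gaussianDensity m A x = 1 := by
  obtain ⟨C, hC, hCA, hdet⟩ := hA.inv.exists_isSymm_mul_self_eq
  have hCdet : C.det ≠ 0 := hdet ▸ (Real.sqrt_pos.2 hA.inv.det_pos).ne'
  rw [funext (gaussianDensity_eq_mul_exp hC hCA m), integral_const_mul,
    integral_sub_right_eq_self (fun x => Real.exp (-(1 / 2) * (C *ᵥ x ⬝ᵥ C *ᵥ x))),
    integral_comp_mulVec (φ := fun w => Real.exp (-(1 / 2) * (w ⬝ᵥ w))) hCdet (by fun_prop),
    integral_exp_neg_half_dotProduct_self, Fintype.card_fin, hdet, det_nonsing_inv,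
    Ring.inverse_eq_inv', Real.sqrt_inv, abs_of_nonneg (inv_nonneg.2 (Real.sqrt_nonneg _)),
    inv_inv]
  exact det_two_pi_smul_rpow_mul_sqrt_det hA

end GaussianDensity

theorem Real.log_div_mul_le_sub {a b : ℝ} (ha : 0 < a) (hb : 0 ≤ b) :
    Real.log (a / b) * b ≤ a - b := by
  rcases hb.eq_or_lt with rfl | hb
  · simpa using ha.le
  · have := mul_le_mul_of_nonneg_right (Real.log_le_sub_one_of_pos (div_pos ha hb)) hb.le
    rwa [sub_one_mul, div_mul_cancel₀ _ hb.ne'] at this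

theorem Real.log_div_mul_lt_sub {a b : ℝ} (ha : 0 < a) (hb : 0 < b) (hab : a ≠ b) :
    Real.log (a / b) * b < a - b := by
  have hne : a / b ≠ 1 := fun h => hab ((div_eq_one_iff_eq hb.ne').mp h)
  have := mul_lt_mul_of_pos_right (Real.log_lt_sub_one_of_pos (div_pos ha hb) hne) hb
  rwa [sub_one_mul, div_mul_cancel₀ _ hb.ne'] at this

section Gibbs

variable {α : Type*} [MeasurableSpace α] {μ : Measure α} {p q : α → ℝ}
  (hp : ∀ x, 0 < p x) (hq : ∀ x, 0 ≤ q x) (hpi : Integrable p μ) (hqi : Integrable q μ)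
  (hi : Integrable (fun x => Real.log (p x / q x) * q x) μ) (hmass : ∫ x, q x ∂μ = ∫ x, p x ∂μ)
include hp hq hpi hqi hi hmass

theorem integral_log_div_mul_nonpos : ∫ x, Real.log (p x / q x) * q x ∂μ ≤ 0 := by
  have := integral_mono hi (g := fun x => p x - q x) (hpi.sub hqi)
    fun x => Real.log_div_mul_le_sub (hp x) (hq x)
  rwa [integral_sub hpi hqi, hmass, sub_self] at this

theorem integral_log_div_mul_eq_zero_iff :
    ∫ x, Real.log (p x / q x) * q x ∂μ = 0 ↔ q =ᵐ[μ] p := by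
  constructor
  · intro h0
    set u := fun x => p x - q x - Real.log (p x / q x) * q x
    have hu0 : 0 ≤ u := fun x => sub_nonneg.2 (Real.log_div_mul_le_sub (hp x) (hq x))
    have hpq : Integrable (fun x => p x - q x) μ := hpi.sub hqi
    have hui : Integrable u μ := hpq.sub hi
    have hu : ∫ x, u x ∂μ = 0 := by
      simp only [u]
      rw [integral_sub hpq hi, integral_sub hpi hqi, hmass, h0, sub_self, sub_zero]
    filter_upwards [(integral_eq_zero_iff_of_nonneg hu0 hui).1 hu] with x hx
    by_contra hne
    rcases (hq x).eq_or_lt with hqx | hqx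
    · have : u x = p x := by simp [u, ← hqx]
      exact (hp x).ne' (this ▸ hx)
    · have := Real.log_div_mul_lt_sub (hp x) hqx (Ne.symm hne)
      exact (sub_pos.2 this).ne' (by simpa [u, sub_sub] using hx)
  · intro hqp
    rw [integral_eq_zero_of_ae]
    filter_upwards [hqp] with x hx
    simp [hx, div_self (hp x).ne']

end Gibbs

theorem MeasureTheory.Integrable.of_integrable_sum_of_le {α κ : Type*} [MeasurableSpace α]
    {μ : Measure α} [Fintype κ] {F G : κ → α → ℝ} (hF : ∀ z, AEStronglyMeasurable (F z) μ)
    (hFG : ∀ z x, F z x ≤ G z x) (hG : ∀ z, Integrable (G z) μ)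
    (hsum : Integrable (fun x => ∑ z, F z x) μ) (z : κ) : Integrable (F z) μ := by
  classical
  refine integrable_of_le_of_le (g₁ := fun x => (∑ w, F w x) - (∑ w, G w x) + G z x) (hF z)
    (Filter.Eventually.of_forall fun x => ?_) (Filter.Eventually.of_forall (hFG z))
    ((hsum.sub (integrable_finsetSum _ fun w _ => hG w)).add (hG z)) (hG z)
  have : ∑ w, (F w x - G w x) ≤ F z x - G z x := by
    rw [← Finset.add_sum_erase _ _ (Finset.mem_univ z)]
    exact add_le_of_nonpos_right (Finset.sum_nonpos fun w _ => sub_nonpos.2 (hFG w x))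
  simp only [Finset.sum_sub_distrib] at this
  linarith

theorem sum_mul_integral_log_div_mul_eq_integral_sum {α κ : Type*} [MeasurableSpace α]
    {μ : Measure α} [Fintype κ] {f : κ → ℝ} (hf : ∀ z, 0 ≤ f z) {g : κ → α → ℝ}
    (hg : ∀ z x, 0 < g z x) (hgm : ∀ z, Measurable (g z)) (hgi : ∀ z, Integrable (g z) μ)
    {q : α → ℝ} (hqm : Measurable q) (hq : ∀ x, 0 ≤ q x) (hqi : Integrable q μ)
    (hsum : Integrable (fun x => ∑ z, f z * (Real.log (g z x / q x) * q x)) μ) :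
    ∑ z, f z * ∫ x, Real.log (g z x / q x) * q x ∂μ =
      ∫ x, ∑ z, f z * (Real.log (g z x / q x) * q x) ∂μ := by
  have hint : ∀ z, Integrable (fun x => f z * (Real.log (g z x / q x) * q x)) μ :=
    Integrable.of_integrable_sum_of_le (G := fun z x => f z * (g z x - q x))
      (fun z => (Measurable.const_mul (by fun_prop) _).aestronglyMeasurable)
      (fun z x => mul_le_mul_of_nonneg_left (Real.log_div_mul_le_sub (hg z x) (hq x)) (hf z))
      (fun z => ((hgi z).sub hqi).const_mul (f z)) hsum
  simp_rw [integral_finsetSum _ fun z _ => hint z, integral_const_mul]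

section MeanField

variable {α κ : Type*} [Fintype κ] {f : κ → ℝ} {g : κ → α → ℝ} {p q : α → ℝ} {c : ℝ}

theorem sum_mul_log_div_mul_eq (hf1 : ∑ z, f z = 1) (hg : ∀ z x, 0 < g z x) (hp : ∀ x, 0 < p x)
    (hlog : ∀ x, ∑ z, f z * Real.log (g z x) = Real.log (p x) + c) (x : α) :
    ∑ z, f z * (Real.log (g z x / q x) * q x) = Real.log (p x / q x) * q x + c * q x := by
  rcases eq_or_ne (q x) 0 with hx | hx
  · simp [hx]
  · simp only [Real.log_div (hg _ x).ne' hx, Real.log_div (hp x).ne' hx, mul_sub, sub_mul,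
      Finset.sum_sub_distrib, ← mul_assoc, ← Finset.sum_mul, hlog x, hf1]
    ring

theorem ite_mul_sum_mul_log_sub_log_eq (hp : ∀ x, 0 < p x)
    (hlog : ∀ x, ∑ z, f z * Real.log (g z x) = Real.log (p x) + c) (x : α) :
    (if q x = 0 then 0 else q x * (∑ z, f z * Real.log (g z x) - Real.log (q x))) =
      Real.log (p x / q x) * q x + c * q x := by
  rcases eq_or_ne (q x) 0 with hx | hx
  · simp [hx]
  · rw [if_neg hx, hlog, Real.log_div (hp x).ne' hx]
    ring

theorem sum_mul_integral_log_div_mul_le_and_eq_iff [MeasurableSpace α] {μ : Measure α}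
    (hf0 : ∀ z, 0 ≤ f z) (hf1 : ∑ z, f z = 1)
    (hg : ∀ z x, 0 < g z x) (hgm : ∀ z, Measurable (g z)) (hgi : ∀ z, Integrable (g z) μ)
    (hp : ∀ x, 0 < p x) (hpi : Integrable p μ) (hp1 : ∫ x, p x ∂μ = 1)
    (hlog : ∀ x, ∑ z, f z * Real.log (g z x) = Real.log (p x) + c)
    (hqm : Measurable q) (hq : ∀ x, 0 ≤ q x) (hq1 : ∫ x, q x ∂μ = 1)
    (hH : Integrable (fun x => if q x = 0 then 0
      else q x * (∑ z, f z * Real.log (g z x) - Real.log (q x))) μ) :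
    ∑ z, f z * ∫ x, Real.log (g z x / q x) * q x ∂μ ≤ c ∧
      (∑ z, f z * ∫ x, Real.log (g z x / q x) * q x ∂μ = c ↔ q =ᵐ[μ] p) := by
  have hqi : Integrable q μ := Integrable.of_integral_ne_zero (by rw [hq1]; exact one_ne_zero)
  simp_rw [ite_mul_sum_mul_log_sub_log_eq hp hlog] at hH
  have hKL : Integrable (fun x => Real.log (p x / q x) * q x) μ :=
    (hH.sub (hqi.const_mul c)).congr (Filter.Eventually.of_forall fun x => by simp)
  have hobj : ∑ z, f z * ∫ x, Real.log (g z x / q x) * q x ∂μ =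
      (∫ x, Real.log (p x / q x) * q x ∂μ) + c := by
    rw [sum_mul_integral_log_div_mul_eq_integral_sum hf0 hg hgm hgi hqm hq hqi
        (by simpa only [sum_mul_log_div_mul_eq hf1 hg hp hlog] using hH)]
    simp_rw [sum_mul_log_div_mul_eq hf1 hg hp hlog]
    rw [integral_add hKL (hqi.const_mul _), integral_const_mul, hq1, mul_one]
  have hmass : ∫ x, q x ∂μ = ∫ x, p x ∂μ := by rw [hq1, hp1]
  rw [hobj, add_le_iff_nonpos_left, add_eq_right]
  exact ⟨integral_log_div_mul_nonpos hp hq hpi hqi hKL hmass,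
    integral_log_div_mul_eq_zero_iff hp hq hpi hqi hKL hmass⟩

end MeanField

theorem gaussian_variational_filtering_update_general
    (d M : ℕ)
    (f : Fin M → ℝ) (hf0 : ∀ z, 0 ≤ f z) (hf1 : (∑ z, f z) = 1)
    (m : Fin M → Fin d → ℝ)
    (S : Fin M → Matrix (Fin d) (Fin d) ℝ) (hS : ∀ z, (S z).PosDef) :
    let P : Matrix (Fin d) (Fin d) ℝ := ∑ z, f z • (S z)⁻¹
    let Sbar := P⁻¹
    let mbar := Sbar.mulVec (∑ z, f z • (S z)⁻¹.mulVec (m z))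
    let logζ := (∑ z, f z * Real.log (gaussianDensity (m z) (S z) mbar))
      + (1 / 2) * Real.log (((2 * Real.pi) • Sbar).det)
    P.PosDef ∧
      ∀ q : (Fin d → ℝ) → ℝ, Measurable q → (∀ x, 0 ≤ q x) →
        (∫ x : Fin d → ℝ, q x) = 1 →
        Integrable
          (fun x : Fin d → ℝ =>
            if q x = 0 then 0
            else q x * ((∑ z, f z * Real.log (gaussianDensity (m z) (S z) x))
              - Real.log (q x))) →
        (∑ z, f z *
            ∫ x : Fin d → ℝ,
              Real.log (gaussianDensity (m z) (S z) x / q x) * q x) ≤ logζ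
          ∧ ((∑ z, f z *
                ∫ x : Fin d → ℝ,
                  Real.log (gaussianDensity (m z) (S z) x / q x) * q x) = logζ
              ↔ q =ᵐ[volume] gaussianDensity mbar Sbar) := by
  intro P Sbar mbar logζ
  obtain ⟨z₀, -, hz₀⟩ := Finset.exists_lt_of_sum_lt (by simp [hf1] : ∑ _z, (0 : ℝ) < ∑ z, f z)
  have hP : P.PosDef := posDef_sum_smul hf0 hz₀ fun z => (hS z).inv
  have hSbar : Sbar.PosDef := hP.inv
  have hPunit : IsUnit P.det := isUnit_iff_ne_zero.2 hP.det_pos.ne'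
  have hprec : Sbar⁻¹ = P := nonsing_inv_nonsing_inv P hPunit
  have hmean : Sbar⁻¹ *ᵥ mbar = ∑ z, f z • (S z)⁻¹ *ᵥ m z := by
    rw [hprec, mulVec_mulVec, mul_nonsing_inv P hPunit, one_mulVec]
  have hlog : ∀ x, ∑ z, f z * Real.log (gaussianDensity (m z) (S z) x) =
      Real.log (gaussianDensity mbar Sbar x) + logζ := fun x => by
    have := sum_mul_log_gaussianDensity_sub_log_eq f hS hSbar hprec hmean x mbar
    simp only [log_gaussianDensity hSbar mbar mbar, sub_self, zero_dotProduct] at this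
    simp only [logζ]
    linarith
  exact ⟨hP, fun q hqm hq hq1 hH => sum_mul_integral_log_div_mul_le_and_eq_iff hf0 hf1
    (fun z => gaussianDensity_pos (hS z) (m z))
    (fun z => (continuous_gaussianDensity (m z) (S z)).measurable)
    (fun z => integrable_gaussianDensity (hS z) (m z)) (gaussianDensity_pos hSbar mbar)
    (integrable_gaussianDensity hSbar mbar) (integral_gaussianDensity hSbar mbar) hlog
    hqm hq hq1 hH⟩

/-- **Gaussian component of the variational filtering update.**
Given a probability vector `f` over `Fin M` and Gaussian parameters `(m z, Σ z)` with each
`Σ z` positive definite, let `P := ∑ z, f z • (Σ z)⁻¹` (positive definite), `Σ̄ := P⁻¹`,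
`m̄ := Σ̄ · (∑ z, f z • (Σ z)⁻¹ m z)`,
`log ζ := ∑ z, f z · log g(m̄ | z) + (1/2)·log det(2π·Σ̄)`, and let `ḡ` be the Gaussian
density with parameters `(m̄, Σ̄)`.  Then for every measurable Lebesgue probability density
`q` on `ℝ^d` for which the mean-field objective integrand is Lebesgue-integrable,
`∑ z, f z · ∫ log (g(x|z)/q(x)) q(x) dx ≤ log ζ`, with equality iff `q = ḡ` a.e.;
in particular `ḡ` is the relative-entropy-optimal mean-field update, with attained
maximal value `log ζ`. -/
theorem gaussian_variational_filtering_update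
    (d M : ℕ) (hM : 1 ≤ M)
    (f : Fin M → ℝ) (hf0 : ∀ z, 0 ≤ f z) (hf1 : (∑ z, f z) = 1)
    (m : Fin M → Fin d → ℝ)
    (S : Fin M → Matrix (Fin d) (Fin d) ℝ) (hS : ∀ z, (S z).PosDef) :
    let P : Matrix (Fin d) (Fin d) ℝ := ∑ z, f z • (S z)⁻¹
    let Sbar := P⁻¹
    let mbar := Sbar.mulVec (∑ z, f z • (S z)⁻¹.mulVec (m z))
    let logζ := (∑ z, f z * Real.log (gaussianDensity (m z) (S z) mbar))
      + (1 / 2) * Real.log (((2 * Real.pi) • Sbar).det)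
    P.PosDef ∧
      ∀ q : (Fin d → ℝ) → ℝ, Measurable q → (∀ x, 0 ≤ q x) →
        (∫ x : Fin d → ℝ, q x) = 1 →
        Integrable
          (fun x : Fin d → ℝ =>
            if q x = 0 then 0
            else q x * ((∑ z, f z * Real.log (gaussianDensity (m z) (S z) x))
              - Real.log (q x))) →
        (∑ z, f z *
            ∫ x : Fin d → ℝ,
              Real.log (gaussianDensity (m z) (S z) x / q x) * q x) ≤ logζ
          ∧ ((∑ z, f z *
                ∫ x : Fin d → ℝ,
                  Real.log (gaussianDensity (m z) (S z) x / q x) * q x) = logζ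
              ↔ q =ᵐ[volume] gaussianDensity mbar Sbar) :=
  gaussian_variational_filtering_update_general d M f hf0 hf1 m S hS
end
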